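/- Let Γ ⊆ ℝⁿ be an n-attractor. Then the boundary ∂Γ is porous (satisfies the ball condition). -/

import Mathlib

/-!
Write `H(A) = ⋃ᵢ sᵢ(A)` for the Hutchinson operator. Since the ratios satisfy `∑ ρᵢⁿ = 1` and the
sets `sᵢ(O)` are disjoint, `vol H(O) = vol O`, so `O \ H(O)` is null, and inductively so is
`O \ Hᵏ(O)` for every `k`. As `O` is bounded and `H(Γ) ⊆ Γ`, the iterates `Hᵏ(O)` lie within
`C (max ρ)ᵏ` of `Γ`, hence the open set `O \ Γ` is null, i.e. empty: `O ⊆ int Γ`.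

Fix a ball `B(z, δ) ⊆ O`. For `p ∈ Γ` and a scale `ε ≤ 1`, follow the self-similarity
`p = s_{i₁} ∘ ⋯ ∘ s_{iₖ}(q)` until the product of the ratios first falls to at most `ε`; it is
then at least `(min ρ) ε`, and the image of `B(z, δ)` is a ball of radius `≍ ε` inside `O`, at
distance `≲ ε` from `p`, which misses `∂Γ`. Such holes at all scales give porosity.
-/

open Metric MeasureTheory Set

/-- A closed set F ⊆ ℝⁿ is porous (satisfies the ball condition) if there is
η ∈ (0,1) such that for every x ∈ ℝⁿ and every r ∈ (0,1) there is y with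
B(y,ηr) ⊆ B(x,r) and B(y,ηr) ∩ F = ∅. -/
def IsPorousSet {n : ℕ} (F : Set (EuclideanSpace ℝ (Fin n))) : Prop :=
  ∃ η : ℝ, 0 < η ∧ η < 1 ∧
    ∀ x : EuclideanSpace ℝ (Fin n), ∀ r : ℝ, 0 < r → r < 1 →
      ∃ y : EuclideanSpace ℝ (Fin n),
        Metric.closedBall y (η * r) ⊆ Metric.closedBall x r ∧
        Metric.closedBall y (η * r) ∩ F = ∅

open Function
open scoped Pointwise

section Similarity

variable {X Y : Type*} [MetricSpace X] [MetricSpace Y] {f : X → Y} {ρ : ℝ}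

theorem injective_of_dist_eq_mul (hρ : 0 < ρ) (hf : ∀ x y, dist (f x) (f y) = ρ * dist x y) :
    Injective f := fun x y hxy => by
  simpa [hρ.ne'] using (hf x y).symm.trans (dist_eq_zero.2 hxy)

theorem image_closedBall_of_dist_eq_mul (hρ : 0 < ρ) (hf : ∀ x y, dist (f x) (f y) = ρ * dist x y)
    (hsurj : Surjective f) (x : X) (r : ℝ) :
    f '' closedBall x r = closedBall (f x) (ρ * r) := by
  ext y
  obtain ⟨z, rfl⟩ := hsurj y
  rw [(injective_of_dist_eq_mul hρ hf).mem_set_image, mem_closedBall, mem_closedBall, hf,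
    mul_le_mul_iff_right₀ hρ]

theorem image_ball_of_dist_eq_mul (hρ : 0 < ρ) (hf : ∀ x y, dist (f x) (f y) = ρ * dist x y)
    (hsurj : Surjective f) (x : X) (r : ℝ) :
    f '' ball x r = ball (f x) (ρ * r) := by
  ext y
  obtain ⟨z, rfl⟩ := hsurj y
  rw [(injective_of_dist_eq_mul hρ hf).mem_set_image, mem_ball, mem_ball, hf,
    mul_lt_mul_iff_right₀ hρ]

theorem isOpenMap_of_dist_eq_mul (hρ : 0 < ρ) (hf : ∀ x y, dist (f x) (f y) = ρ * dist x y)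
    (hsurj : Surjective f) : IsOpenMap f := by
  intro U hU
  rw [Metric.isOpen_iff]
  rintro _ ⟨x, hx, rfl⟩
  obtain ⟨ε, hε, hxU⟩ := Metric.isOpen_iff.1 hU x hx
  refine ⟨ρ * ε, mul_pos hρ hε, ?_⟩
  rw [← image_ball_of_dist_eq_mul hρ hf hsurj]
  exact image_mono hxU

end Similarity

section EuclideanSimilarity

variable {E : Type*} [NormedAddCommGroup E] [NormedSpace ℝ E] [StrictConvexSpace ℝ E]
  [FiniteDimensional ℝ E] {f : E → E} {ρ : ℝ}

/-- Mazur–Ulam in the strictly convex form: `ρ⁻¹ • f` is an isometry, hence affine. -/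
theorem exists_linearIsometryEquiv_of_dist_eq_mul (hρ : 0 < ρ)
    (hf : ∀ x y, dist (f x) (f y) = ρ * dist x y) :
    ∃ L : E ≃ₗᵢ[ℝ] E, ∀ x, f x = f 0 + ρ • L x := by
  have hiso : Isometry (fun x => ρ⁻¹ • f x) := Isometry.of_dist_eq fun x y => by
    rw [dist_smul₀, hf, Real.norm_eq_abs, abs_inv, abs_of_pos hρ, inv_mul_cancel_left₀ hρ.ne']
  let A := hiso.affineIsometryOfStrictConvexSpace
  refine ⟨A.linearIsometry.toLinearIsometryEquiv rfl, fun x => ?_⟩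
  have hA : ρ⁻¹ • f x = A.linearIsometry x + ρ⁻¹ • f 0 := by
    simpa [A] using congrFun (AffineMap.decomp A.toAffineMap) x
  calc f x = ρ • (ρ⁻¹ • f x) := (smul_inv_smul₀ hρ.ne' _).symm
    _ = f 0 + ρ • A.linearIsometry x := by rw [hA, smul_add, smul_inv_smul₀ hρ.ne', add_comm]

theorem surjective_of_dist_eq_mul (hρ : 0 < ρ) (hf : ∀ x y, dist (f x) (f y) = ρ * dist x y) :
    Surjective f := by
  obtain ⟨L, hL⟩ := exists_linearIsometryEquiv_of_dist_eq_mul hρ hf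
  intro y
  refine ⟨L.symm (ρ⁻¹ • (y - f 0)), ?_⟩
  rw [hL, L.apply_symm_apply, smul_inv_smul₀ hρ.ne', add_sub_cancel]

end EuclideanSimilarity

theorem volume_image_of_dist_eq_mul {E : Type*} [NormedAddCommGroup E] [InnerProductSpace ℝ E]
    [FiniteDimensional ℝ E] [MeasurableSpace E] [BorelSpace E] {f : E → E} {ρ : ℝ} (hρ : 0 < ρ)
    (hf : ∀ x y, dist (f x) (f y) = ρ * dist x y) (S : Set E) :
    volume (f '' S) = ENNReal.ofReal (ρ ^ Module.finrank ℝ E) * volume S := by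
  obtain ⟨L, hL⟩ := exists_linearIsometryEquiv_of_dist_eq_mul hρ hf
  have hfS : f '' S = (f 0 + ·) '' (ρ • (L.toMeasurableEquiv.symm ⁻¹' S)) := by
    rw [← L.toMeasurableEquiv.image_eq_preimage_symm, ← image_smul, image_image, image_image]
    exact image_congr fun x _ => hL x
  rw [hfS, image_add_left, measure_preimage_add, Measure.addHaar_smul,
    L.symm.measurePreserving.measure_preimage_equiv, abs_of_pos (pow_pos hρ _)]

def hutchinson {ι X : Type*} (s : ι → X → X) (A : Set X) : Set X :=
  ⋃ i, s i '' A

structure OpenSetCondition {ι X : Type*} [TopologicalSpace X] [Bornology X] (s : ι → X → X)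
    (O : Set X) : Prop where
  nonempty : O.Nonempty
  isOpen : IsOpen O
  isBounded : Bornology.IsBounded O
  hutchinson_subset : hutchinson s O ⊆ O
  pairwise_disjoint : Pairwise (Disjoint on fun i => s i '' O)

section Hutchinson

variable {ι X : Type*} (s : ι → X → X)

theorem diff_hutchinson_subset (A B C : Set X) :
    A \ hutchinson s B ⊆ (A \ hutchinson s C) ∪ hutchinson s (C \ B) := by
  rintro x ⟨hxA, hxB⟩
  by_cases hxC : x ∈ hutchinson s C
  · obtain ⟨i, c, hc, rfl⟩ := mem_iUnion.1 hxC
    exact Or.inr (mem_iUnion.2 ⟨i, c, ⟨hc, fun hcB => hxB (mem_iUnion.2 ⟨i, c, hcB, rfl⟩)⟩, rfl⟩)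
  · exact Or.inl ⟨hxA, hxC⟩

variable [MetricSpace X] {s} {Γ : Set X} {b : ℝ}

theorem exists_dist_le_of_mem_iterate_hutchinson (hb : 0 ≤ b)
    (hs : ∀ i x y, dist (s i x) (s i y) ≤ b * dist x y) (hΓ : hutchinson s Γ ⊆ Γ) {A : Set X}
    {C : ℝ} (hA : ∀ a ∈ A, ∃ γ ∈ Γ, dist a γ ≤ C) :
    ∀ k, ∀ a ∈ (hutchinson s)^[k] A, ∃ γ ∈ Γ, dist a γ ≤ b ^ k * C := by
  intro k
  induction k with
  | zero => simpa using hA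
  | succ k ih =>
    rw [iterate_succ_apply']
    rintro _ ⟨-, ⟨i, rfl⟩, a, ha, rfl⟩
    obtain ⟨γ, hγ, hdist⟩ := ih a ha
    refine ⟨s i γ, hΓ (mem_iUnion.2 ⟨i, γ, hγ, rfl⟩), ?_⟩
    calc dist (s i a) (s i γ) ≤ b * dist a γ := hs i a γ
      _ ≤ b * (b ^ k * C) := mul_le_mul_of_nonneg_left hdist hb
      _ = b ^ (k + 1) * C := by ring

theorem iInter_iterate_hutchinson_subset_closure (hb₀ : 0 ≤ b) (hb₁ : b < 1)
    (hs : ∀ i x y, dist (s i x) (s i y) ≤ b * dist x y) (hΓ : hutchinson s Γ ⊆ Γ)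
    (hΓne : Γ.Nonempty) {A : Set X} (hA : Bornology.IsBounded A) :
    ⋂ k, (hutchinson s)^[k] A ⊆ closure Γ := by
  obtain ⟨γ₀, hγ₀⟩ := hΓne
  obtain ⟨C, hC⟩ := hA.subset_closedBall γ₀
  have hdist := exists_dist_le_of_mem_iterate_hutchinson hb₀ hs hΓ fun a ha => ⟨γ₀, hγ₀, hC ha⟩
  intro x hx
  rw [Metric.mem_closure_iff]
  intro ε hε
  have hlim : Filter.Tendsto (fun k : ℕ => b ^ k * C) Filter.atTop (nhds 0) := by
    simpa using (tendsto_pow_atTop_nhds_zero_of_lt_one hb₀ hb₁).mul_const C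
  obtain ⟨k, hk⟩ := (hlim.eventually (gt_mem_nhds hε)).exists
  obtain ⟨γ, hγ, hxγ⟩ := hdist k x (mem_iInter.1 hx k)
  exact ⟨γ, hγ, hxγ.trans_lt hk⟩

end Hutchinson

theorem volume_hutchinson_eq_zero {ι E : Type*} [Countable ι] [NormedAddCommGroup E]
    [InnerProductSpace ℝ E] [FiniteDimensional ℝ E] [MeasurableSpace E] [BorelSpace E]
    {s : ι → E → E} {ρ : ι → ℝ} (hρ : ∀ i, 0 < ρ i)
    (hs : ∀ i x y, dist (s i x) (s i y) = ρ i * dist x y) {A : Set E} (hA : volume A = 0) :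
    volume (hutchinson s A) = 0 :=
  measure_iUnion_null fun i => by rw [volume_image_of_dist_eq_mul (hρ i) (hs i), hA, mul_zero]

section OpenSetCondition

variable {ι E : Type*} [Fintype ι] [NormedAddCommGroup E] [InnerProductSpace ℝ E]
  [FiniteDimensional ℝ E] [MeasurableSpace E] [BorelSpace E] {s : ι → E → E} {ρ : ι → ℝ}
  {O : Set E}

theorem OpenSetCondition.volume_diff_hutchinson_eq_zero (hO : OpenSetCondition s O)
    (hρ : ∀ i, 0 < ρ i) (hs : ∀ i x y, dist (s i x) (s i y) = ρ i * dist x y)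
    (hsum : ∑ i, ρ i ^ Module.finrank ℝ E = 1) :
    volume (O \ hutchinson s O) = 0 := by
  have hopen : ∀ i, IsOpen (s i '' O) := fun i =>
    isOpenMap_of_dist_eq_mul (hρ i) (hs i) (surjective_of_dist_eq_mul (hρ i) (hs i)) O hO.isOpen
  have hvol : volume (hutchinson s O) = volume O := by
    rw [hutchinson, measure_iUnion hO.pairwise_disjoint fun i => (hopen i).measurableSet,
      tsum_fintype]
    simp_rw [volume_image_of_dist_eq_mul (hρ _) (hs _)]
    rw [← Finset.sum_mul, ← ENNReal.ofReal_sum_of_nonneg fun i _ => pow_nonneg (hρ i).le _, hsum,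
      ENNReal.ofReal_one, one_mul]
  rw [measure_sdiff hO.hutchinson_subset (isOpen_iUnion hopen).measurableSet.nullMeasurableSet
    (hvol ▸ hO.isBounded.measure_lt_top.ne), hvol, tsub_self]

theorem OpenSetCondition.volume_diff_iterate_hutchinson_eq_zero (hO : OpenSetCondition s O)
    (hρ : ∀ i, 0 < ρ i) (hs : ∀ i x y, dist (s i x) (s i y) = ρ i * dist x y)
    (hsum : ∑ i, ρ i ^ Module.finrank ℝ E = 1) (k : ℕ) :
    volume (O \ (hutchinson s)^[k] O) = 0 := by
  induction k with
  | zero => simp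
  | succ k ih =>
    rw [iterate_succ_apply']
    exact measure_mono_null (diff_hutchinson_subset s O _ O) <| measure_union_null
      (hO.volume_diff_hutchinson_eq_zero hρ hs hsum) (volume_hutchinson_eq_zero hρ hs ih)

theorem OpenSetCondition.subset_of_sum_pow_finrank_eq_one [Nonempty ι]
    (hO : OpenSetCondition s O) (hρ : ∀ i, ρ i ∈ Ioo 0 1)
    (hs : ∀ i x y, dist (s i x) (s i y) = ρ i * dist x y)
    (hsum : ∑ i, ρ i ^ Module.finrank ℝ E = 1) {Γ : Set E} (hΓne : Γ.Nonempty)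
    (hΓc : IsClosed Γ) (hΓ : hutchinson s Γ ⊆ Γ) :
    O ⊆ Γ := by
  have hρ₀ : ∀ i, 0 < ρ i := fun i => (hρ i).1
  obtain ⟨i₁, hi₁⟩ := Finite.exists_max ρ
  have hlip : ∀ i x y, dist (s i x) (s i y) ≤ ρ i₁ * dist x y := fun i x y =>
    (hs i x y).trans_le (mul_le_mul_of_nonneg_right (hi₁ i) dist_nonneg)
  have hnull : volume (O \ Γ) = 0 := by
    refine measure_mono_null ?_
      (measure_iUnion_null (hO.volume_diff_iterate_hutchinson_eq_zero hρ₀ hs hsum))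
    rintro x ⟨hxO, hxΓ⟩
    by_contra hx
    simp only [mem_iUnion, mem_sdiff, not_exists, not_and, not_not] at hx
    exact hxΓ <| hΓc.closure_subset <| iInter_iterate_hutchinson_subset_closure (hρ₀ i₁).le
      (hρ i₁).2 hlip hΓ hΓne hO.isBounded (mem_iInter.2 fun k => hx k hxO)
  exact sdiff_eq_empty.1 (((hO.isOpen.sdiff hΓc).measure_eq_zero_iff volume).1 hnull)

end OpenSetCondition

section Holes

variable {ι X : Type*} [Finite ι] [Nonempty ι] [MetricSpace X] {s : ι → X → X} {ρ : ι → ℝ}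
  {Γ O : Set X} {z : X} {δ R : ℝ}

theorem exists_closedBall_subset_near_of_subset_hutchinson (hρ : ∀ i, ρ i ∈ Ioo 0 1)
    (hs : ∀ i x y, dist (s i x) (s i y) = ρ i * dist x y) (hsurj : ∀ i, Surjective (s i))
    (hΓ : Γ ⊆ hutchinson s Γ) (hO : hutchinson s O ⊆ O) (hδ : 0 < δ) (hzO : closedBall z δ ⊆ O)
    (hΓR : Γ ⊆ closedBall z R) :
    ∃ c > 0, ∀ p ∈ Γ, ∀ ε, 0 < ε → ε ≤ 1 → ∃ y, closedBall y (c * ε) ⊆ O ∧ dist y p ≤ R * ε := by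
  have hρ₀ : ∀ i, 0 < ρ i := fun i => (hρ i).1
  have hsO : ∀ i, s i '' O ⊆ O := fun i => (subset_iUnion (fun i => s i '' O) i).trans hO
  obtain ⟨i₀, hi₀⟩ := Finite.exists_min ρ
  obtain ⟨i₁, hi₁⟩ := Finite.exists_max ρ
  have hstep : ∀ i ε y q, closedBall y (ρ i₀ * δ * (ε / ρ i)) ⊆ O → dist y q ≤ R * (ε / ρ i) →
      closedBall (s i y) (ρ i₀ * δ * ε) ⊆ O ∧ dist (s i y) (s i q) ≤ R * ε := by
    intro i ε y q hyO hyq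
    refine ⟨?_, ?_⟩
    · rw [show ρ i₀ * δ * ε = ρ i * (ρ i₀ * δ * (ε / ρ i)) by field_simp [(hρ₀ i).ne'],
        ← image_closedBall_of_dist_eq_mul (hρ₀ i) (hs i) (hsurj i)]
      exact (image_mono hyO).trans (hsO i)
    · rw [hs, show R * ε = ρ i * (R * (ε / ρ i)) by field_simp [(hρ₀ i).ne']]
      exact mul_le_mul_of_nonneg_left hyq (hρ₀ i).le
  have hdirect : ∀ i q ε, q ∈ Γ → ε ≤ 1 → ρ i ≤ ε →
      closedBall (s i z) (ρ i₀ * δ * ε) ⊆ O ∧ dist (s i z) (s i q) ≤ R * ε := by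
    intro i q ε hq hε₁ hiε
    refine hstep i ε z q ((closedBall_subset_closedBall ?_).trans hzO) ?_
    · rw [mul_assoc, mul_comm δ, ← mul_assoc]
      apply mul_le_of_le_one_left hδ.le
      rw [mul_div_assoc', div_le_one (hρ₀ i)]
      nlinarith [hi₀ i, (hρ₀ i₀).le]
    · rw [dist_comm]
      exact (mem_closedBall.1 (hΓR hq)).trans
        (le_mul_of_one_le_right (dist_nonneg.trans (mem_closedBall.1 (hΓR hq)))
          ((one_le_div (hρ₀ i)).2 hiε))
  refine ⟨ρ i₀ * δ, mul_pos (hρ₀ i₀) hδ, fun p hp ε hε hε₁ => ?_⟩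
  obtain ⟨K, hK⟩ := exists_pow_lt_of_lt_one hε (hρ i₁).2
  induction K generalizing p ε with
  | zero =>
    obtain ⟨i, q, hq, rfl⟩ := mem_iUnion.1 (hΓ hp)
    exact ⟨_, hdirect i q ε hq hε₁ (by simpa using ((hρ i).2.trans hK).le)⟩
  | succ K ih =>
    obtain ⟨i, q, hq, rfl⟩ := mem_iUnion.1 (hΓ hp)
    rcases le_or_gt (ρ i) ε with hiε | hεi
    · exact ⟨_, hdirect i q ε hq hε₁ hiε⟩
    · have hK' : ρ i₁ ^ K < ε / ρ i := by
        rw [lt_div_iff₀ (hρ₀ i)]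
        calc ρ i₁ ^ K * ρ i ≤ ρ i₁ ^ K * ρ i₁ :=
              mul_le_mul_of_nonneg_left (hi₁ i) (pow_nonneg (hρ₀ i₁).le K)
          _ < ε := by rwa [← pow_succ]
      obtain ⟨y, hyO, hyq⟩ := ih q hq (ε / ρ i) (div_pos hε (hρ₀ i))
        ((div_le_one (hρ₀ i)).2 hεi.le) hK'
      exact ⟨_, hstep i ε y q hyO hyq⟩

end Holes

theorem isPorousSet_of_forall_exists_closedBall {n : ℕ} {F : Set (EuclideanSpace ℝ (Fin n))}
    {c R : ℝ} (hc : 0 < c) (hR : 0 ≤ R)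
    (h : ∀ p ∈ F, ∀ ε, 0 < ε → ε ≤ 1 → ∃ y, closedBall y (c * ε) ∩ F = ∅ ∧ dist y p ≤ R * ε) :
    IsPorousSet F := by
  set t := 1 / (4 * (R + 1))
  have ht : 0 < t := by positivity
  have hRt : R * t ≤ 1 / 4 := by
    rw [mul_one_div, div_le_div_iff₀ (by positivity) (by norm_num)]
    linarith
  have ht₁ : t ≤ 1 / 4 := by
    rw [div_le_div_iff₀ (by positivity) (by norm_num)]
    linarith
  refine ⟨min (c * t) (1 / 4), by positivity, (min_le_right _ _).trans_lt (by norm_num),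
    fun x r hr hr₁ => ?_⟩
  have hη : min (c * t) (1 / 4) * r ≤ r / 4 := by nlinarith [min_le_right (c * t) (1 / 4)]
  by_cases hnear : ∃ p ∈ F, dist p x ≤ r / 2
  · obtain ⟨p, hp, hpx⟩ := hnear
    obtain ⟨y, hyF, hyp⟩ := h p hp (t * r) (mul_pos ht hr) (by nlinarith)
    have hsub : closedBall y (min (c * t) (1 / 4) * r) ⊆ closedBall y (c * (t * r)) :=
      closedBall_subset_closedBall (by rw [← mul_assoc]; nlinarith [min_le_left (c * t) (1 / 4)])
    refine ⟨y, fun u hu => ?_, subset_eq_empty (inter_subset_inter_left F hsub) hyF⟩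
    rw [mem_closedBall] at hu ⊢
    calc dist u x ≤ dist u y + dist y p + dist p x := dist_triangle4 u y p x
      _ ≤ r / 4 + R * (t * r) + r / 2 := by gcongr; exact hu.trans hη
      _ ≤ r := by nlinarith
  · push Not at hnear
    refine ⟨x, closedBall_subset_closedBall (by linarith), eq_empty_of_forall_notMem ?_⟩
    rintro u ⟨hu, huF⟩
    linarith [hnear u huF, mem_closedBall.1 hu]

theorem statement8_general
    (n : ℕ)
    (M : ℕ)
    (s : Fin M → EuclideanSpace ℝ (Fin n) → EuclideanSpace ℝ (Fin n))
    (ρ : Fin M → ℝ)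
    (hρ : ∀ m, ρ m ∈ Set.Ioo (0 : ℝ) 1)
    (hsim : ∀ m x y, dist (s m x) (s m y) = ρ m * dist x y)
    (Γ : Set (EuclideanSpace ℝ (Fin n)))
    (hΓne : Γ.Nonempty) (hΓcomp : IsCompact Γ)
    (hattr : Γ = ⋃ m, s m '' Γ)
    (hOSC : ∃ O : Set (EuclideanSpace ℝ (Fin n)), O.Nonempty ∧ IsOpen O ∧
      Bornology.IsBounded O ∧ (⋃ m, s m '' O) ⊆ O ∧
      ∀ m m', m ≠ m' → Disjoint (s m '' O) (s m' '' O))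
    (hsum : ∑ m, ρ m ^ n = 1) :
    IsPorousSet (frontier Γ) := by
  obtain ⟨O, hO⟩ : ∃ O, OpenSetCondition s O := by
    obtain ⟨O, hOne, hOopen, hObdd, hOsub, hOdisj⟩ := hOSC
    exact ⟨O, hOne, hOopen, hObdd, hOsub, hOdisj⟩
  have : Nonempty (Fin M) := by
    obtain ⟨m, -⟩ := mem_iUnion.1 (hattr.subset hΓne.some_mem)
    exact ⟨m⟩
  have hOΓ : O ⊆ interior Γ := interior_maximal (hO.subset_of_sum_pow_finrank_eq_one hρ hsim
    (by rwa [finrank_euclideanSpace_fin]) hΓne hΓcomp.isClosed hattr.symm.subset) hO.isOpen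
  obtain ⟨z, hz⟩ := hO.nonempty
  obtain ⟨δ, hδ, hzδ⟩ := nhds_basis_closedBall.mem_iff.1 (hO.isOpen.mem_nhds hz)
  obtain ⟨R, hR, hΓR⟩ := hΓcomp.isBounded.subset_closedBall_lt 0 z
  obtain ⟨c, hc, hholes⟩ := exists_closedBall_subset_near_of_subset_hutchinson hρ hsim
    (fun m => surjective_of_dist_eq_mul (hρ m).1 (hsim m)) hattr.subset hO.hutchinson_subset hδ hzδ
    hΓR
  refine isPorousSet_of_forall_exists_closedBall hc hR.le fun p hp ε hε hε₁ => ?_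
  rw [hΓcomp.isClosed.frontier_eq] at hp ⊢
  obtain ⟨y, hyO, hyp⟩ := hholes p hp.1 ε hε hε₁
  exact ⟨y, subset_eq_empty (fun u hu => hu.2.2 (hOΓ (hyO hu.1))) rfl, hyp⟩

/-- If Γ is an n-attractor then ∂Γ is porous (satisfies the ball
condition). -/
theorem statement8
    (n : ℕ) (hn : 1 ≤ n)
    (M : ℕ) (hM : 2 ≤ M)
    (s : Fin M → EuclideanSpace ℝ (Fin n) → EuclideanSpace ℝ (Fin n))
    (ρ : Fin M → ℝ)
    (hρ : ∀ m, ρ m ∈ Set.Ioo (0 : ℝ) 1)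
    (hsim : ∀ m x y, dist (s m x) (s m y) = ρ m * dist x y)
    (Γ : Set (EuclideanSpace ℝ (Fin n)))
    (hΓne : Γ.Nonempty) (hΓcomp : IsCompact Γ)
    (hattr : Γ = ⋃ m, s m '' Γ)
    (hOSC : ∃ O : Set (EuclideanSpace ℝ (Fin n)), O.Nonempty ∧ IsOpen O ∧
      Bornology.IsBounded O ∧ (⋃ m, s m '' O) ⊆ O ∧
      ∀ m m', m ≠ m' → Disjoint (s m '' O) (s m' '' O))
    (hsum : ∑ m, ρ m ^ n = 1) :
    IsPorousSet (frontier Γ) :=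
  statement8_general n M s ρ hρ hsim Γ hΓne hΓcomp hattr hOSC hsum
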